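/- Let C be an exact category satisfying Condition (*). Then the pushout of a monomorphism m : S → A along any regular epimorphism e : S → T exists, this pushout square is also a pullback, and the pushout of m is again a monomorphism. -/

import Mathlib

/-!
The relation `R = Δ_A ∪ (m × m)(ker e)` on `A` is the image of the span
`[1, r₁ ≫ m], [1, r₂ ≫ m] : A ⨿ ker e ⇉ A`, where `r₁, r₂` is the kernel pair of `e`. It is
reflexive and symmetric by construction. Transitivity is where Condition (*) enters: by (b), (c)
and (d) the pullback of the span with itself is covered, through a regular epimorphism, by a
coproduct of pieces on each of which the composite pair visibly lies in `R`. By exactness `R` is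
the kernel pair of a regular epimorphism `p : A ⟶ B`. A map out of `A` coequalizes `R` exactly
when it identifies `r₁ ≫ m` with `r₂ ≫ m`, so the square is a pushout. By (b) and (c),
an element of `R` whose first component lies in `S` is, locally, a pair in `(m × m)(ker e)`; this
makes the square a pullback. Finally `n` is mono because its pullback `m` along the regular
epimorphism `p` is.
-/

open CategoryTheory Limits

/-- A commutative square (top `fst`, left `snd`, right `f`, bottom `g`) is a feeble
pullback if the canonical comparison morphism into the pullback is a regular
epimorphism. -/
def IsFeeblePullback {C : Type*} [CategoryTheory.Category C] {P X Y Z : C}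
    (fst : P ⟶ X) (snd : P ⟶ Y) (f : X ⟶ Z) (g : Y ⟶ Z)
    [CategoryTheory.Limits.HasPullback f g] : Prop :=
  ∃ w : fst ≫ f = snd ≫ g,
    Nonempty (CategoryTheory.RegularEpi (CategoryTheory.Limits.pullback.lift fst snd w))

/-- Regular epimorphisms are stable under pullback. -/
def RegularEpisPullbackStable (C : Type*) [CategoryTheory.Category C]
    [CategoryTheory.Limits.HasPullbacks C] : Prop :=
  ∀ {X Y Z : C} (f : X ⟶ Z) (g : Y ⟶ Z), CategoryTheory.RegularEpi g →
    Nonempty (CategoryTheory.RegularEpi (CategoryTheory.Limits.pullback.fst f g))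

/-- Kernel pairs admit coequalizers. -/
def HasKernelPairCoequalizers (C : Type*) [CategoryTheory.Category C]
    [CategoryTheory.Limits.HasPullbacks C] : Prop :=
  ∀ {X Y : C} (f : X ⟶ Y),
    CategoryTheory.Limits.HasCoequalizer (CategoryTheory.Limits.pullback.fst f f)
      (CategoryTheory.Limits.pullback.snd f f)

/-- Binary coproducts of pullback squares are pullback squares (Condition (b)). -/
def CoprodOfPullbacksIsPullback (C : Type*) [CategoryTheory.Category C]
    [CategoryTheory.Limits.HasBinaryCoproducts C] : Prop :=
  ∀ {P X Y Z P' X' Y' Z' : C}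
    (fst : P ⟶ X) (snd : P ⟶ Y) (f : X ⟶ Z) (g : Y ⟶ Z)
    (fst' : P' ⟶ X') (snd' : P' ⟶ Y') (f' : X' ⟶ Z') (g' : Y' ⟶ Z'),
    CategoryTheory.IsPullback fst snd f g → CategoryTheory.IsPullback fst' snd' f' g' →
      CategoryTheory.IsPullback (CategoryTheory.Limits.coprod.map fst fst')
        (CategoryTheory.Limits.coprod.map snd snd')
        (CategoryTheory.Limits.coprod.map f f') (CategoryTheory.Limits.coprod.map g g')

/-- Condition (c): for each monomorphism `m : S ⟶ A`, the square with top
`[1,1] : S+S ⟶ S`, left `m+1`, right `m` and bottom `[1,m] : A+S ⟶ A` is a pullback. -/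
def MonoSquaresArePullbacks (C : Type*) [CategoryTheory.Category C]
    [CategoryTheory.Limits.HasBinaryCoproducts C] : Prop :=
  ∀ {S A : C} (m : S ⟶ A), CategoryTheory.Mono m →
    CategoryTheory.IsPullback (CategoryTheory.Limits.coprod.desc (𝟙 S) (𝟙 S))
      (CategoryTheory.Limits.coprod.map m (𝟙 S)) m
      (CategoryTheory.Limits.coprod.desc (𝟙 A) m)

/-- Condition (d): for each regular epimorphism `p : E ⟶ B`, the codiagonal square over
`p` is a feeble pullback. -/
def RegEpiSquaresAreFeeblePullbacks (C : Type*) [CategoryTheory.Category C]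
    [CategoryTheory.Limits.HasPullbacks C]
    [CategoryTheory.Limits.HasBinaryCoproducts C] : Prop :=
  ∀ {E B : C} (p : E ⟶ B), CategoryTheory.RegularEpi p →
    IsFeeblePullback (CategoryTheory.Limits.coprod.desc (𝟙 E) (𝟙 E))
      (CategoryTheory.Limits.coprod.map p p) p
      (CategoryTheory.Limits.coprod.desc (𝟙 B) (𝟙 B))

/-- Every internal equivalence relation is effective (a kernel pair): Barr-exactness. -/
def EquivRelsEffective (C : Type*) [CategoryTheory.Category C]
    [CategoryTheory.Limits.HasFiniteLimits C] : Prop :=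
  ∀ {R S : C} (r₁ r₂ : R ⟶ S),
    CategoryTheory.Mono (CategoryTheory.Limits.prod.lift r₁ r₂) →
    (∃ d : S ⟶ R, d ≫ r₁ = 𝟙 S ∧ d ≫ r₂ = 𝟙 S) →
    (∃ s : R ⟶ R, s ≫ r₁ = r₂ ∧ s ≫ r₂ = r₁) →
    (∃ t : CategoryTheory.Limits.pullback r₂ r₁ ⟶ R,
      t ≫ r₁ = CategoryTheory.Limits.pullback.fst r₂ r₁ ≫ r₁ ∧
      t ≫ r₂ = CategoryTheory.Limits.pullback.snd r₂ r₁ ≫ r₂) →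
    ∃ (Q : C) (q : S ⟶ Q), CategoryTheory.IsKernelPair q r₁ r₂

attribute [local simp] pullback.lift_fst pullback.lift_snd pullback.lift_fst_assoc
  pullback.lift_snd_assoc coprod.inl_desc coprod.inr_desc coprod.inl_desc_assoc
  coprod.inr_desc_assoc prod.lift_fst prod.lift_snd prod.lift_fst_assoc prod.lift_snd_assoc

section RegularCategory

variable {C : Type*} [Category C]

theorem regular_of_hasKernelPairCoequalizers [HasFiniteLimits C]
    (hcoeq : HasKernelPairCoequalizers C) (hstab : RegularEpisPullbackStable C) : Regular C where
  hasCoequalizer_of_isKernelPair {_ _ _ f _ _} h :=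
    have := hcoeq f
    hasColimit_of_iso (F := parallelPair (pullback.fst f f) (pullback.snd f f))
      (parallelPair.ext h.isoPullback (Iso.refl _))
  regularEpiIsStableUnderBaseChange :=
    .mk' fun _ _ _ f g _ ⟨⟨hg⟩⟩ => ⟨hstab f g hg⟩

theorem CategoryTheory.IsPullback.of_exists_lift {S T A B : C}
    {e : S ⟶ T} {m : S ⟶ A} {n : T ⟶ B} {p : A ⟶ B} [Mono m] (w : e ≫ n = m ≫ p)
    (h : ∀ {X : C} (a : X ⟶ T) (b : X ⟶ A), a ≫ n = b ≫ p → ∃ x : X ⟶ S, x ≫ e = a ∧ x ≫ m = b) :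
    IsPullback e m n p :=
  .of_isLimit (PullbackCone.IsLimit.mk w (fun s => (h s.fst s.snd s.condition).choose)
    (fun s => (h s.fst s.snd s.condition).choose_spec.1)
    (fun s => (h s.fst s.snd s.condition).choose_spec.2)
    (fun s u _ hu => by rw [← cancel_mono m, hu, (h s.fst s.snd s.condition).choose_spec.2]))

instance strongEpi_coprod_map [HasBinaryCoproducts C] {X X' Y Y' : C} (f : X ⟶ Y) (f' : X' ⟶ Y')
    [StrongEpi f] [StrongEpi f'] : StrongEpi (coprod.map f f') :=
  StrongEpi.mk' fun _ _ z _ u v sq =>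
    have sq₁ : CommSq (coprod.inl ≫ u) f z (coprod.inl ≫ v) := ⟨by simp [sq.w]⟩
    have sq₂ : CommSq (coprod.inr ≫ u) f' z (coprod.inr ≫ v) := ⟨by simp [sq.w]⟩
    ⟨⟨{ l := coprod.desc sq₁.lift sq₂.lift
        fac_left := by
          apply coprod.hom_ext <;> simp only [coprod.inl_map_assoc, coprod.inr_map_assoc,
            coprod.inl_desc, coprod.inr_desc, CommSq.fac_left]
        fac_right := by
          apply coprod.hom_ext <;>
            simp only [coprod.inl_desc_assoc, coprod.inr_desc_assoc, CommSq.fac_right] }⟩⟩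

theorem CategoryTheory.IsKernelPair.exists_comp_eq {R X Y Z : C} {a b : R ⟶ X} {e : X ⟶ Y}
    [IsRegularEpi e] (he : IsKernelPair e a b) (z : X ⟶ Z) (h : a ≫ z = b ≫ z) :
    ∃ y : Y ⟶ Z, e ≫ y = z :=
  ⟨EffectiveEpi.desc e z fun g₁ g₂ hg => by simpa using he.lift g₁ g₂ hg ≫= h,
    EffectiveEpi.fac _ _ _⟩

theorem isPushout_of_isKernelPair {R S T A B : C} {e : S ⟶ T} {m : S ⟶ A} {n : T ⟶ B}
    {p : A ⟶ B} {ρ₁ ρ₂ : R ⟶ A} [Epi e] [IsRegularEpi p] (hp : IsKernelPair p ρ₁ ρ₂)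
    (w : e ≫ n = m ≫ p) (h : ∀ {Z : C} (x : T ⟶ Z) (z : A ⟶ Z), e ≫ x = m ≫ z → ρ₁ ≫ z = ρ₂ ≫ z) :
    IsPushout e m n p := by
  have desc (s : PushoutCocone e m) := hp.exists_comp_eq s.inr (h s.inl s.inr s.condition)
  refine .of_isColimit (PushoutCocone.IsColimit.mk w (fun s => (desc s).choose) (fun s => ?_)
    (fun s => (desc s).choose_spec) (fun s u _ hu => ?_))
  · rw [← cancel_epi e, reassoc_of% w, (desc s).choose_spec, s.condition]
  · rw [← cancel_epi p, hu, (desc s).choose_spec]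

variable [Regular C]

theorem CategoryTheory.IsPullback.isRegularEpi_fst {P X Y Z : C} {fst : P ⟶ X} {snd : P ⟶ Y}
    {f : X ⟶ Z} {g : Y ⟶ Z} (h : IsPullback fst snd f g) [IsRegularEpi g] : IsRegularEpi fst :=
  Regular.regularEpiIsStableUnderBaseChange.of_isPullback h.flip ‹_›

theorem exists_isRegularEpi_comp_eq {X Y Z : C} (f : X ⟶ Y) (g : Z ⟶ Y) [IsRegularEpi g] :
    ∃ (W : C) (ε : W ⟶ X) (x : W ⟶ Z), IsRegularEpi ε ∧ ε ≫ f = x ≫ g :=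
  ⟨_, pullback.fst f g, pullback.snd f g, inferInstance, pullback.condition⟩

theorem CategoryTheory.IsKernelPair.exists_isRegularEpi {R A Q : C} {a b : R ⟶ A} {q : A ⟶ Q}
    (hq : IsKernelPair q a b) : ∃ (B : C) (p : A ⟶ B), IsRegularEpi p ∧ IsKernelPair p a b :=
  ⟨_, factorThruImage q, inferInstance,
    .cancel_right_of_mono (f₂ := image.ι q) (by simpa using hq)⟩

theorem CategoryTheory.IsPullback.mono_of_isRegularEpi {S T A B : C} {e : S ⟶ T} {m : S ⟶ A}
    {n : T ⟶ B} {p : A ⟶ B} (h : IsPullback e m n p) [Mono m] [IsRegularEpi p] : Mono n where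
  right_cancellation {X} u v huv := by
    obtain ⟨W, ε, t, _, hε⟩ := exists_isRegularEpi_comp_eq (u ≫ n) p
    obtain ⟨s₁, hs₁e, hs₁m⟩ := h.exists_lift (ε ≫ u) t (by simpa using hε)
    obtain ⟨s₂, hs₂e, hs₂m⟩ := h.exists_lift (ε ≫ v) t (by simpa [huv] using hε)
    have : s₁ = s₂ := by rw [← cancel_mono m, hs₁m, hs₂m]
    rw [← cancel_epi ε, ← hs₁e, ← hs₂e, this]

end RegularCategory

section FeeblePullback

variable {C : Type*} [Category C] [Regular C] {P X Y Z : C}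
  {fst : P ⟶ X} {snd : P ⟶ Y} {f : X ⟶ Z} {g : Y ⟶ Z}

theorem isFeeblePullback_iff {P' : C} {fst' : P' ⟶ X} {snd' : P' ⟶ Y}
    (hP : IsPullback fst' snd' f g) :
    IsFeeblePullback fst snd f g ↔ ∃ w : fst ≫ f = snd ≫ g, IsRegularEpi (hP.lift fst snd w) := by
  refine exists_congr fun w => ?_
  have := (MorphismProperty.regularEpi C).cancel_right_of_respectsIso (hP.lift fst snd w)
    hP.isoPullback.hom
  rw [show pullback.lift fst snd w = hP.lift fst snd w ≫ hP.isoPullback.hom by ext <;> simp]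
  exact ⟨fun h => this.1 ⟨h⟩, fun h => (this.2 h).1⟩

theorem IsFeeblePullback.flip (h : IsFeeblePullback fst snd f g) :
    IsFeeblePullback snd fst g f := by
  have hP := IsPullback.of_hasPullback f g
  obtain ⟨w, _⟩ := (isFeeblePullback_iff hP).1 h
  refine (isFeeblePullback_iff hP.flip).2 ⟨w.symm, ?_⟩
  rwa [show hP.flip.lift snd fst w.symm = hP.lift fst snd w from hP.hom_ext (by simp) (by simp)]

theorem CategoryTheory.IsPullback.isFeeblePullback (h : IsPullback fst snd f g) :
    IsFeeblePullback fst snd f g :=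
  (isFeeblePullback_iff h).2 ⟨h.w, by
    rw [show h.lift fst snd h.w = 𝟙 P from h.hom_ext (by simp) (by simp)]; infer_instance⟩

theorem isFeeblePullback_of_isRegularEpi {X' : C} (c : X' ⟶ X) [IsRegularEpi c] (f : X ⟶ Z) :
    IsFeeblePullback c (c ≫ f) f (𝟙 Z) := by
  have hP : IsPullback (𝟙 X) f f (𝟙 Z) := .of_horiz_isIso ⟨by simp⟩
  refine (isFeeblePullback_iff hP).2 ⟨by simp, ?_⟩
  rwa [show hP.lift c (c ≫ f) (by simp) = c by simpa using hP.lift_fst c (c ≫ f) (by simp)]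

theorem IsFeeblePullback.paste_horiz {X₁₁ X₁₂ X₁₃ X₂₁ X₂₂ X₂₃ : C}
    {h₁₁ : X₁₁ ⟶ X₁₂} {h₁₂ : X₁₂ ⟶ X₁₃} {h₂₁ : X₂₁ ⟶ X₂₂} {h₂₂ : X₂₂ ⟶ X₂₃}
    {v₁₁ : X₁₁ ⟶ X₂₁} {v₁₂ : X₁₂ ⟶ X₂₂} {v₁₃ : X₁₃ ⟶ X₂₃}
    (s : IsFeeblePullback h₁₁ v₁₁ v₁₂ h₂₁) (t : IsFeeblePullback h₁₂ v₁₂ v₁₃ h₂₂) :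
    IsFeeblePullback (h₁₁ ≫ h₁₂) v₁₁ v₁₃ (h₂₁ ≫ h₂₂) := by
  obtain ⟨ws, ⟨κs⟩⟩ := s
  obtain ⟨wt, ⟨κt⟩⟩ := t
  have := isRegularEpi_of_regularEpi κs
  have := isRegularEpi_of_regularEpi κt
  have sq := IsPullback.of_hasPullback (pullback.snd v₁₃ h₂₂) h₂₁
  let θ := sq.lift (pullback.fst v₁₂ h₂₁ ≫ pullback.lift h₁₂ v₁₂ wt) (pullback.snd v₁₂ h₂₁)
    (by simp [pullback.condition])
  have hθ : IsPullback θ (pullback.fst v₁₂ h₂₁) (pullback.fst _ _) (pullback.lift h₁₂ v₁₂ wt) :=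
    .of_right (by simpa [θ] using (IsPullback.of_hasPullback v₁₂ h₂₁).flip) (by simp [θ]) sq.flip
  have := hθ.isRegularEpi_fst
  have outer := sq.paste_horiz (.of_hasPullback v₁₃ h₂₂)
  refine (isFeeblePullback_iff outer).2 ⟨by simp [wt, reassoc_of% ws], ?_⟩
  rw [show outer.lift _ _ _ = pullback.lift h₁₁ v₁₁ ws ≫ θ from
    outer.hom_ext (by simp [θ]) (by simp [θ])]
  infer_instance

theorem IsFeeblePullback.of_comp_isRegularEpi {X' Y' : C} {c : X' ⟶ X} {c' : Y' ⟶ Y}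
    [IsRegularEpi c] [IsRegularEpi c'] {fst : P ⟶ X'} {snd : P ⟶ Y'}
    (h : IsFeeblePullback fst snd (c ≫ f) (c' ≫ g)) :
    IsFeeblePullback (fst ≫ c) (snd ≫ c') f g := by
  have h₁ := h.paste_horiz (isFeeblePullback_of_isRegularEpi c f)
  simp only [Category.comp_id] at h₁
  have h₂ := h₁.flip.paste_horiz (isFeeblePullback_of_isRegularEpi c' g)
  simp only [Category.comp_id] at h₂
  exact h₂.flip

variable [HasBinaryCoproducts C]

theorem IsFeeblePullback.coprod_map (hb : CoprodOfPullbacksIsPullback C) {P' X' Y' Z' : C}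
    {fst' : P' ⟶ X'} {snd' : P' ⟶ Y'} {f' : X' ⟶ Z'} {g' : Y' ⟶ Z'}
    (h : IsFeeblePullback fst snd f g) (h' : IsFeeblePullback fst' snd' f' g') :
    IsFeeblePullback (coprod.map fst fst') (coprod.map snd snd') (coprod.map f f')
      (coprod.map g g') := by
  obtain ⟨w, ⟨κ⟩⟩ := h
  obtain ⟨w', ⟨κ'⟩⟩ := h'
  have := isRegularEpi_of_regularEpi κ
  have := isRegularEpi_of_regularEpi κ'
  have hP := hb _ _ _ _ _ _ _ _ (.of_hasPullback f g) (.of_hasPullback f' g')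
  refine (isFeeblePullback_iff hP).2 ⟨by simp [w, w'], ?_⟩
  rw [show hP.lift _ _ _ = coprod.map (pullback.lift fst snd w) (pullback.lift fst' snd' w') from
    hP.hom_ext (by ext <;> simp) (by ext <;> simp)]
  infer_instance

theorem IsFeeblePullback.coprod_desc (hb : CoprodOfPullbacksIsPullback C)
    (hd : RegEpiSquaresAreFeeblePullbacks C) [IsRegularEpi f] {P' Y' : C} {fst' : P' ⟶ X}
    {snd' : P' ⟶ Y'} {g' : Y' ⟶ Z}
    (h : IsFeeblePullback fst snd f g) (h' : IsFeeblePullback fst' snd' f g') :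
    IsFeeblePullback (coprod.desc fst fst') (coprod.map snd snd') f (coprod.desc g g') := by
  simpa using (h.coprod_map hb h').paste_horiz (hd f (IsRegularEpi.getStruct f))

end FeeblePullback

section ImageRelation

variable {C : Type*} [Category C] [Regular C] {X A : C} (g₁ g₂ : X ⟶ A)

noncomputable def imageFst : image (prod.lift g₁ g₂) ⟶ A := image.ι _ ≫ prod.fst

noncomputable def imageSnd : image (prod.lift g₁ g₂) ⟶ A := image.ι _ ≫ prod.snd

@[simp]
theorem factorThruImage_imageFst : factorThruImage (prod.lift g₁ g₂) ≫ imageFst g₁ g₂ = g₁ := by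
  simp [imageFst]

@[simp]
theorem factorThruImage_imageSnd : factorThruImage (prod.lift g₁ g₂) ≫ imageSnd g₁ g₂ = g₂ := by
  simp [imageSnd]

theorem prod_lift_imageFst_imageSnd :
    prod.lift (imageFst g₁ g₂) (imageSnd g₁ g₂) = image.ι (prod.lift g₁ g₂) := by
  ext <;> simp [imageFst, imageSnd]

instance : Mono (prod.lift (imageFst g₁ g₂) (imageSnd g₁ g₂)) := by
  rw [prod_lift_imageFst_imageSnd]; infer_instance

variable {g₁ g₂}

theorem exists_imageFst_imageSnd_symm (σ : X ⟶ X) (h₁ : σ ≫ g₁ = g₂) (h₂ : σ ≫ g₂ = g₁) :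
    ∃ s : image (prod.lift g₁ g₂) ⟶ image (prod.lift g₁ g₂),
      s ≫ imageFst g₁ g₂ = imageSnd g₁ g₂ ∧ s ≫ imageSnd g₁ g₂ = imageFst g₁ g₂ := by
  have sq : CommSq (σ ≫ factorThruImage _) (factorThruImage _) (image.ι (prod.lift g₁ g₂))
      (prod.lift (imageSnd g₁ g₂) (imageFst g₁ g₂)) := ⟨by
    rw [← prod_lift_imageFst_imageSnd]; ext <;> simp [h₁, h₂]⟩
  exact ⟨sq.lift, by simp [imageFst], by simp [imageSnd]⟩

theorem exists_imageFst_imageSnd_trans {P : C} {q₁ q₂ : P ⟶ X}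
    (hq : IsFeeblePullback q₁ q₂ g₂ g₁) (τ : P ⟶ X) (h₁ : τ ≫ g₁ = q₁ ≫ g₁)
    (h₂ : τ ≫ g₂ = q₂ ≫ g₂) :
    ∃ t : pullback (imageSnd g₁ g₂) (imageFst g₁ g₂) ⟶ image (prod.lift g₁ g₂),
      t ≫ imageFst g₁ g₂ = pullback.fst _ _ ≫ imageFst g₁ g₂ ∧
      t ≫ imageSnd g₁ g₂ = pullback.snd _ _ ≫ imageSnd g₁ g₂ := by
  obtain ⟨w, ⟨κ⟩⟩ : IsFeeblePullback (q₁ ≫ factorThruImage _) (q₂ ≫ factorThruImage _)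
      (imageSnd g₁ g₂) (imageFst g₁ g₂) := .of_comp_isRegularEpi (by simpa using hq)
  have := isRegularEpi_of_regularEpi κ
  have sq : CommSq (τ ≫ factorThruImage _) (pullback.lift _ _ w) (image.ι (prod.lift g₁ g₂))
      (prod.lift (pullback.fst _ _ ≫ imageFst g₁ g₂) (pullback.snd _ _ ≫ imageSnd g₁ g₂)) := ⟨by
    rw [← prod_lift_imageFst_imageSnd]; ext <;> simp [h₁, h₂]⟩
  exact ⟨sq.lift, by simp [imageFst], by simp [imageSnd]⟩

end ImageRelation

section PushoutRelation

variable {C : Type*} [Category C] [HasBinaryCoproducts C]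

theorem isPullback_coprodDesc_coprodMap (hb : CoprodOfPullbacksIsPullback C)
    (hc : MonoSquaresArePullbacks C) {S A K : C} (m : S ⟶ A) [Mono m] (r : K ⟶ S) :
    IsPullback (coprod.desc (𝟙 S) r) (coprod.map m (𝟙 K)) m (coprod.desc (𝟙 A) (r ≫ m)) := by
  simpa using (hb _ _ _ _ _ _ _ _ (.of_horiz_isIso ⟨by simp⟩ : IsPullback (𝟙 S) m m (𝟙 A))
    (.of_vert_isIso ⟨by simp⟩ : IsPullback r (𝟙 K) (𝟙 S) r)).paste_horiz (hc m inferInstance)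

variable [Regular C] {S A T : C} (m : S ⟶ A) (e : S ⟶ T)

noncomputable def pushoutSpanFst : A ⨿ pullback e e ⟶ A :=
  coprod.desc (𝟙 A) (pullback.fst e e ≫ m)

noncomputable def pushoutSpanSnd : A ⨿ pullback e e ⟶ A :=
  coprod.desc (𝟙 A) (pullback.snd e e ≫ m)

local notation "g₁" => pushoutSpanFst m e
local notation "g₂" => pushoutSpanSnd m e
local notation "ρ₁" => imageFst (pushoutSpanFst m e) (pushoutSpanSnd m e)
local notation "ρ₂" => imageSnd (pushoutSpanFst m e) (pushoutSpanSnd m e)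

theorem exists_pushoutRel_refl :
    ∃ d : A ⟶ image (prod.lift g₁ g₂), d ≫ ρ₁ = 𝟙 A ∧ d ≫ ρ₂ = 𝟙 A :=
  ⟨coprod.inl ≫ factorThruImage _, by simp [pushoutSpanFst], by simp [pushoutSpanSnd]⟩

theorem exists_pushoutRel_symm :
    ∃ s : image (prod.lift g₁ g₂) ⟶ image (prod.lift g₁ g₂), s ≫ ρ₁ = ρ₂ ∧ s ≫ ρ₂ = ρ₁ :=
  exists_imageFst_imageSnd_symm (coprod.map (𝟙 A) (pullback.lift _ _ pullback.condition.symm))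
    (by ext <;> simp [pushoutSpanFst, pushoutSpanSnd])
    (by ext <;> simp [pushoutSpanFst, pushoutSpanSnd])

theorem pushoutRel_comp_eq_iff {Z : C} (z : A ⟶ Z) :
    ρ₁ ≫ z = ρ₂ ≫ z ↔ pullback.fst e e ≫ m ≫ z = pullback.snd e e ≫ m ≫ z := by
  rw [← cancel_epi (factorThruImage (prod.lift g₁ g₂)), ← Category.assoc, ← Category.assoc,
    factorThruImage_imageFst, factorThruImage_imageSnd]
  constructor
  · intro h; simpa [pushoutSpanFst, pushoutSpanSnd] using coprod.inr ≫= h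
  · intro h; ext <;> simp [pushoutSpanFst, pushoutSpanSnd, h]

theorem exists_lift_of_pushoutRel (hb : CoprodOfPullbacksIsPullback C)
    (hc : MonoSquaresArePullbacks C) [Mono m] {W : C} (h : W ⟶ image (prod.lift g₁ g₂))
    (u : W ⟶ S) (hu : h ≫ ρ₁ = u ≫ m) : ∃ v : W ⟶ S, v ≫ m = h ≫ ρ₂ ∧ v ≫ e = u ≫ e := by
  obtain ⟨W', ε, x, _, hε⟩ := exists_isRegularEpi_comp_eq h (factorThruImage (prod.lift g₁ g₂))
  have hP := isPullback_coprodDesc_coprodMap hb hc m (pullback.fst e e)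
  let l := hP.lift (ε ≫ u) x (by
    rw [Category.assoc, ← hu, reassoc_of% hε, factorThruImage_imageFst, pushoutSpanFst])
  have sq : CommSq (l ≫ coprod.desc (𝟙 S) (pullback.snd e e)) ε m (h ≫ ρ₂) := ⟨by
    have hx : l ≫ coprod.map m (𝟙 _) = x := hP.lift_snd _ _ _
    rw [reassoc_of% hε, factorThruImage_imageSnd, ← hx, Category.assoc, Category.assoc]
    congr 1; ext <;> simp [pushoutSpanSnd]⟩
  refine ⟨sq.lift, sq.fac_right, ?_⟩
  have he : coprod.desc (𝟙 S) (pullback.snd e e) ≫ e =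
      coprod.desc (𝟙 S) (pullback.fst e e) ≫ e := by
    ext <;> simp [pullback.condition]
  rw [← cancel_epi ε, sq.fac_left_assoc, Category.assoc, he, hP.lift_fst_assoc, Category.assoc]

theorem isPullback_of_isKernelPair_pushoutRel (hb : CoprodOfPullbacksIsPullback C)
    (hc : MonoSquaresArePullbacks C) [Mono m] [IsRegularEpi e] {B : C} {p : A ⟶ B} {n : T ⟶ B}
    (hp : IsKernelPair p ρ₁ ρ₂) (w : e ≫ n = m ≫ p) : IsPullback e m n p := by
  refine .of_exists_lift w fun a b hab => ?_
  obtain ⟨X', ε, s, _, hε⟩ := exists_isRegularEpi_comp_eq a e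
  obtain ⟨v, hvm, hve⟩ := exists_lift_of_pushoutRel m e hb hc
    (hp.lift (s ≫ m) (ε ≫ b) (by simp [← w, ← reassoc_of% hε, hab])) s (hp.lift_fst _ _ _)
  have sq : CommSq v ε m b := ⟨by simp [hvm]⟩
  exact ⟨sq.lift, by rw [← cancel_epi ε, sq.fac_left_assoc, hve, hε], sq.fac_right⟩

theorem exists_pushoutRel_trans (hb : CoprodOfPullbacksIsPullback C)
    (hc : MonoSquaresArePullbacks C) (hd : RegEpiSquaresAreFeeblePullbacks C) [Mono m] :
    ∃ t : pullback ρ₂ ρ₁ ⟶ image (prod.lift g₁ g₂),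
      t ≫ ρ₁ = pullback.fst ρ₂ ρ₁ ≫ ρ₁ ∧ t ≫ ρ₂ = pullback.snd ρ₂ ρ₁ ≫ ρ₂ := by
  set r₁ := pullback.fst e e
  set r₂ := pullback.snd e e
  have : IsSplitEpi r₁ := ⟨⟨⟨pullback.diagonal e, pullback.diagonal_fst e⟩⟩⟩
  have : IsSplitEpi g₂ := ⟨⟨⟨coprod.inl, by simp [pushoutSpanSnd]⟩⟩⟩
  -- The pullback of `g₂` and `g₁` is covered by `(A ⨿ K) ⨿ (K ⨿ K ×_S K)`, `K` the kernel pair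
  -- of `e`: pairs whose second member is diagonal, whose first one is, or neither.
  have hV : IsFeeblePullback (coprod.desc (𝟙 _) (pullback.fst r₁ r₂))
      (coprod.map r₁ (pullback.snd r₁ r₂)) r₁ (coprod.desc (𝟙 S) r₂) :=
    .coprod_desc hb hd (by simpa using isFeeblePullback_of_isRegularEpi (𝟙 _) r₁)
      (IsPullback.of_hasPullback r₁ r₂).isFeeblePullback
  have hK : IsFeeblePullback (coprod.map r₁ (pullback.snd r₁ r₂) ≫ coprod.map m (𝟙 _))
      (coprod.desc (𝟙 _) (pullback.fst r₁ r₂)) g₂ (r₁ ≫ m) :=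
    hV.flip.paste_horiz (isPullback_coprodDesc_coprodMap hb hc m r₂).flip.isFeeblePullback
  have hq : IsFeeblePullback
      (coprod.desc (𝟙 _) (coprod.map r₁ (pullback.snd r₁ r₂) ≫ coprod.map m (𝟙 _)))
      (coprod.map g₂ (coprod.desc (𝟙 _) (pullback.fst r₁ r₂))) g₂ g₁ :=
    .coprod_desc hb hd (by simpa using isFeeblePullback_of_isRegularEpi (𝟙 _) g₂) hK
  let tv := pullback.lift (pullback.snd r₁ r₂ ≫ r₁) (pullback.fst r₁ r₂ ≫ r₂)
    (by simp only [Category.assoc, r₁, r₂]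
        rw [pullback.condition (f := e), ← pullback.condition_assoc (f := pullback.fst e e),
          pullback.condition (f := e)])
  refine exists_imageFst_imageSnd_trans hq
    (coprod.desc (𝟙 _) (coprod.desc coprod.inr (tv ≫ coprod.inr))) ?_ ?_
  · ext <;> simp [pushoutSpanFst, tv, r₁]
  · ext <;> simp [pushoutSpanSnd, tv, r₂]

end PushoutRelation

/-- Let `C` be an exact category satisfying Condition (*). Then the pushout of a
monomorphism `m : S ⟶ A` along any regular epimorphism `e : S ⟶ T` exists, the pushout
square is also a pullback, and the pushout of `m` is again a monomorphism. -/
theorem pushout_of_mono_along_regularEpi {C : Type*} [Category C]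
    [HasFiniteLimits C] (hcoeq : HasKernelPairCoequalizers C)
    (hstab : RegularEpisPullbackStable C) (hexact : EquivRelsEffective C)
    [HasFiniteCoproducts C]
    (hb : CoprodOfPullbacksIsPullback C) (hc : MonoSquaresArePullbacks C)
    (hd : RegEpiSquaresAreFeeblePullbacks C)
    {S A T : C} (m : S ⟶ A) [Mono m] (e : S ⟶ T) (_ : RegularEpi e) :
    ∃ (B : C) (p : A ⟶ B) (n : T ⟶ B),
      IsPushout e m n p ∧ IsPullback e m n p ∧ Mono n := by
  have : Regular C := regular_of_hasKernelPairCoequalizers hcoeq hstab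
  have : IsRegularEpi e := isRegularEpi_of_regularEpi ‹_›
  obtain ⟨Q, q, hq⟩ := hexact _ _ inferInstance (exists_pushoutRel_refl m e)
    (exists_pushoutRel_symm m e) (exists_pushoutRel_trans m e hb hc hd)
  obtain ⟨B, p, _, hp⟩ := hq.exists_isRegularEpi
  obtain ⟨n, hn⟩ := (IsKernelPair.of_hasPullback e).exists_comp_eq (m ≫ p)
    ((pushoutRel_comp_eq_iff m e p).1 hp.w)
  have hpb := isPullback_of_isKernelPair_pushoutRel m e hb hc hp hn
  refine ⟨B, p, n, isPushout_of_isKernelPair hp hn fun x z hxz => ?_, hpb,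
    hpb.mono_of_isRegularEpi⟩
  rw [pushoutRel_comp_eq_iff, ← hxz, pullback.condition_assoc]
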